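/- For any set Z equipped with a well order, the well order ≤_PD is a monomial order on the free Ω-operated semigroup 𝔖(Z). -/

import Mathlib

/-! # Common setup: free Ω-operated semigroups/monoids (Ω = {D,P}),
degrees, orders, Gröbner–Shirshov machinery. -/

set_option maxHeartbeats 1000000

noncomputable section

universe u v w

/-! ## The free Ω-operated semigroup 𝔖(Z) -/

mutual
/-- Atoms: letters of `Z`, or bracketed words `⌊u⌋_D`, `⌊u⌋_P`. -/
inductive OpAtom (Z : Type u) : Type u
  | letter : Z → OpAtom Z
  | brD : OpWord Z → OpAtom Z
  | brP : OpWord Z → OpAtom Z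
/-- Elements of the free Ω-operated semigroup 𝔖(Z): nonempty words in atoms. -/
inductive OpWord (Z : Type u) : Type u
  | single : OpAtom Z → OpWord Z
  | cons : OpAtom Z → OpWord Z → OpWord Z
end

namespace OpWord

def mul {Z : Type u} : OpWord Z → OpWord Z → OpWord Z
  | .single a, w => .cons a w
  | .cons a u, w => .cons a (mul u w)

instance {Z : Type u} : Mul (OpWord Z) := ⟨mul⟩

theorem mul_assoc' {Z : Type u} : ∀ u v w : OpWord Z, (u * v) * w = u * (v * w)
  | .single _, _, _ => rfl
  | .cons a u, v, w => congrArg (OpWord.cons a) (mul_assoc' u v w)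

instance {Z : Type u} : Semigroup (OpWord Z) := { mul_assoc := mul_assoc' }

/-- The operator `u ↦ ⌊u⌋_D` on 𝔖(Z). -/
def opD {Z : Type u} (u : OpWord Z) : OpWord Z := .single (.brD u)
/-- The operator `u ↦ ⌊u⌋_P` on 𝔖(Z). -/
def opP {Z : Type u} (u : OpWord Z) : OpWord Z := .single (.brP u)
/-- The letter `z` as a word. -/
def ofL {Z : Type u} (z : Z) : OpWord Z := .single (.letter z)

end OpWord

/-! ## Degrees -/

mutual
  /-- number of occurrences of `⌊·⌋_D` -/
  def atomDegD {Z : Type u} : OpAtom Z → ℕ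
    | .letter _ => 0
    | .brD w => wordDegD w + 1
    | .brP w => wordDegD w
  def wordDegD {Z : Type u} : OpWord Z → ℕ
    | .single a => atomDegD a
    | .cons a w => atomDegD a + wordDegD w
end

mutual
  /-- number of occurrences of `⌊·⌋_P` -/
  def atomDegP {Z : Type u} : OpAtom Z → ℕ
    | .letter _ => 0
    | .brD w => wordDegP w
    | .brP w => wordDegP w + 1
  def wordDegP {Z : Type u} : OpWord Z → ℕ
    | .single a => atomDegP a
    | .cons a w => atomDegP a + wordDegP w
end

mutual
  /-- number of occurrences of letters of `Z`, with multiplicity -/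
  def atomDegZ {Z : Type u} : OpAtom Z → ℕ
    | .letter _ => 1
    | .brD w => wordDegZ w
    | .brP w => wordDegZ w
  def wordDegZ {Z : Type u} : OpWord Z → ℕ
    | .single a => atomDegZ a
    | .cons a w => atomDegZ a + wordDegZ w
end

mutual
  /-- The GD-degree: each right half bracket `⌋_D` contributes the number of
  `Z`-letters strictly to its right. -/
  def atomDegGD {Z : Type u} : OpAtom Z → ℕ
    | .letter _ => 0
    | .brD w => wordDegGD w
    | .brP w => wordDegGD w
  def wordDegGD {Z : Type u} : OpWord Z → ℕ
    | .single a => atomDegGD a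
    | .cons a w => atomDegGD a + wordDegGD w + atomDegD a * wordDegZ w
end

mutual
  /-- The GP-degree: each bracket `⌊·⌋_P` enclosing `i` of the `n` `Z`-letters
  contributes `n - i`, i.e. the number of `Z`-letters it does not enclose. -/
  def atomDegGP {Z : Type u} : OpAtom Z → ℕ
    | .letter _ => 0
    | .brD w => wordDegGP w
    | .brP w => wordDegGP w
  def wordDegGP {Z : Type u} : OpWord Z → ℕ
    | .single a => atomDegGP a
    | .cons a w => atomDegGP a + wordDegGP w + atomDegP a * wordDegZ w + wordDegP w * atomDegZ a
end

/-- The breadth: number of top-level atoms. -/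
def OpWord.breadth {Z : Type u} : OpWord Z → ℕ
  | .single _ => 1
  | .cons _ w => 1 + breadth w

/-! ## The order ≤_Dlex -/

mutual
  /-- order on atoms: letters < D-brackets < P-brackets, letters compared via the
  order of `Z`, brackets via the (recursive) order `Dlex` of the enclosed words. -/
  def atomDlexLt {Z : Type u} [LT Z] : OpAtom Z → OpAtom Z → Prop
    | .letter a, .letter b => a < b
    | .letter _, .brD _ => True
    | .letter _, .brP _ => True
    | .brD _, .letter _ => False
    | .brD u, .brD v =>
        OpWord.breadth u < OpWord.breadth v ∨
          (OpWord.breadth u = OpWord.breadth v ∧ wordLexLt u v)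
    | .brD _, .brP _ => True
    | .brP _, .letter _ => False
    | .brP _, .brD _ => False
    | .brP u, .brP v =>
        OpWord.breadth u < OpWord.breadth v ∨
          (OpWord.breadth u = OpWord.breadth v ∧ wordLexLt u v)
  /-- pure lexicographic comparison of the atom sequences (used for words of equal breadth) -/
  def wordLexLt {Z : Type u} [LT Z] : OpWord Z → OpWord Z → Prop
    | .single a, .single b => atomDlexLt a b
    | .single a, .cons b _ => atomDlexLt a b
    | .cons a _, .single b => atomDlexLt a b
    | .cons a u, .cons b v => atomDlexLt a b ∨ (a = b ∧ wordLexLt u v)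
end

/-- The strict degree-lexicographic order `<_Dlex` on 𝔖(Z): first by breadth, then
lexicographically. -/
def dlexLt {Z : Type u} [LT Z] (u v : OpWord Z) : Prop :=
  OpWord.breadth u < OpWord.breadth v ∨
    (OpWord.breadth u = OpWord.breadth v ∧ wordLexLt u v)

/-! ## The order ≤_PD -/

/-- The strict order `<_PD`: lexicographic combination of the comparisons of
`deg_D`, `deg_P`, `deg_Z`, `deg_GD`, `deg_GP` and finally `<_Dlex`. -/
def pdLt {Z : Type u} [LT Z] (u v : OpWord Z) : Prop :=
  wordDegD u < wordDegD v ∨ (wordDegD u = wordDegD v ∧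
  (wordDegP u < wordDegP v ∨ (wordDegP u = wordDegP v ∧
  (wordDegZ u < wordDegZ v ∨ (wordDegZ u = wordDegZ v ∧
  (wordDegGD u < wordDegGD v ∨ (wordDegGD u = wordDegGD v ∧
  (wordDegGP u < wordDegGP v ∨ (wordDegGP u = wordDegGP v ∧
  dlexLt u v)))))))))

/-- The order `≤_PD` on 𝔖(Z). -/
def pdLe {Z : Type u} [LT Z] (u v : OpWord Z) : Prop :=
  pdLt u v ∨ u = v

/-! ## Generic order-theoretic predicates -/

/-- `le` is a pre-linear order (reflexive, transitive, total preorder) satisfying the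
descending chain condition: any descending chain is eventually order-equivalent. -/
def IsPrelinearDCC {X : Type u} (le : X → X → Prop) : Prop :=
  (∀ x, le x x) ∧
  (∀ x y z, le x y → le y z → le x z) ∧
  (∀ x y, le x y ∨ le y x) ∧
  (∀ f : ℕ → X, (∀ n, le (f (n + 1)) (f n)) →
    ∃ N, ∀ n, N ≤ n → le (f n) (f (n + 1)) ∧ le (f (n + 1)) (f n))

/-- `le` is a linear order: reflexive, transitive, antisymmetric and total. -/
def IsLinOrderRel {X : Type u} (le : X → X → Prop) : Prop :=
  (∀ x, le x x) ∧
  (∀ x y z, le x y → le y z → le x z) ∧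
  (∀ x y, le x y → le y x → x = y) ∧
  (∀ x y, le x y ∨ le y x)

/-- `le` is a well order: a linear order in which every descending chain stabilizes. -/
def IsLinWellOrder {X : Type u} (le : X → X → Prop) : Prop :=
  IsLinOrderRel le ∧
  ∀ f : ℕ → X, (∀ n, le (f (n + 1)) (f n)) → ∃ N, ∀ n, N ≤ n → f n = f N

/-- the strict relation associated to `le`. -/
def ltOf {X : Type u} (le : X → X → Prop) (a b : X) : Prop := le a b ∧ a ≠ b

/-! ## Contexts (elements of 𝔖⋆(Z)) and substitution -/

mutual
  /-- number of occurrences of the star `⋆` (the letter `none`). -/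
  def atomSCount {Z : Type u} : OpAtom (Option Z) → ℕ
    | .letter none => 1
    | .letter (some _) => 0
    | .brD w => wordSCount w
    | .brP w => wordSCount w
  def wordSCount {Z : Type u} : OpWord (Option Z) → ℕ
    | .single a => atomSCount a
    | .cons a w => atomSCount a + wordSCount w
end

mutual
  /-- evaluation of a word over the alphabet `X` under an assignment `σ : X → 𝔖(Z)`. -/
  def atomSEval {X : Type v} {Z : Type u} (σ : X → OpWord Z) : OpAtom X → OpWord Z
    | .letter x => σ x
    | .brD w => OpWord.opD (wordSEval σ w)
    | .brP w => OpWord.opP (wordSEval σ w)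
  def wordSEval {X : Type v} {Z : Type u} (σ : X → OpWord Z) : OpWord X → OpWord Z
    | .single a => atomSEval σ a
    | .cons a w => OpWord.mul (atomSEval σ a) (wordSEval σ w)
end

/-- `substS q u` is `q|_u` : replace the star `⋆` in `q` by `u`. -/
def substS {Z : Type u} (q : OpWord (Option Z)) (u : OpWord Z) : OpWord Z :=
  wordSEval (fun oz => match oz with | some z => OpWord.ofL z | none => u) q

mutual
  /-- number of occurrences of the letter `x`. -/
  def atomLCount {X : Type v} [DecidableEq X] (x : X) : OpAtom X → ℕ
    | .letter y => if y = x then 1 else 0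
    | .brD w => wordLCount x w
    | .brP w => wordLCount x w
  def wordLCount {X : Type v} [DecidableEq X] (x : X) : OpWord X → ℕ
    | .single a => atomLCount x a
    | .cons a w => atomLCount x a + wordLCount x w
end

/-- words with no occurrence of a bracket (elements of the free semigroup S(Z) ⊆ 𝔖(Z)). -/
def atomPlain {Z : Type u} : OpAtom Z → Prop
  | .letter _ => True
  | .brD _ => False
  | .brP _ => False

def wordPlain {Z : Type u} : OpWord Z → Prop
  | .single a => atomPlain a
  | .cons a w => atomPlain a ∧ wordPlain w

mutual
  /-- functorial relabelling of letters. -/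
  def atomMap {Z : Type u} {W : Type v} (f : Z → W) : OpAtom Z → OpAtom W
    | .letter z => .letter (f z)
    | .brD w => .brD (wordMap f w)
    | .brP w => .brP (wordMap f w)
  def wordMap {Z : Type u} {W : Type v} (f : Z → W) : OpWord Z → OpWord W
    | .single a => .single (atomMap f a)
    | .cons a w => .cons (atomMap f a) (wordMap f w)
end
/-! ## The free Ω-operated monoid 𝔐(Z) = 𝔖(Z′) ⊔ {1}, Z′ = Z ⊔ {†_P, †_D} -/

/-- The extended alphabet `Z′ = Z ⊔ {†_P, †_D}`, where `†_P = ⌊1⌋_P`, `†_D = ⌊1⌋_D`;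
ordered by `†_D < z < †_P`. -/
inductive UL (Z : Type u) : Type u
  | dagD : UL Z
  | ofZ : Z → UL Z
  | dagP : UL Z

instance {Z : Type u} [LT Z] : LT (UL Z) :=
  ⟨fun a b =>
    match a, b with
    | .dagD, .dagD => False
    | .dagD, _ => True
    | .ofZ _, .dagD => False
    | .ofZ x, .ofZ y => x < y
    | .ofZ _, .dagP => True
    | .dagP, _ => False⟩

/-- The free Ω-operated monoid 𝔐(Z), realized as 𝔖(Z ⊔ {†_P, †_D}) ⊔ {1}. -/
inductive MWord (Z : Type u) : Type u
  | one : MWord Z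
  | ofW : OpWord (UL Z) → MWord Z

namespace MWord

def mul {Z : Type u} : MWord Z → MWord Z → MWord Z
  | .one, y => y
  | .ofW u, .one => .ofW u
  | .ofW u, .ofW v => .ofW (u * v)

instance {Z : Type u} : Mul (MWord Z) := ⟨mul⟩
instance {Z : Type u} : One (MWord Z) := ⟨MWord.one⟩

theorem mul_assoc' {Z : Type u} : ∀ a b c : MWord Z, a * b * c = a * (b * c)
  | .one, _, _ => rfl
  | .ofW _, .one, _ => rfl
  | .ofW _, .ofW _, .one => rfl
  | .ofW u, .ofW v, .ofW w => congrArg MWord.ofW (OpWord.mul_assoc' u v w)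

instance {Z : Type u} : Monoid (MWord Z) where
  mul_assoc := mul_assoc'
  one_mul _ := rfl
  mul_one a := by cases a <;> rfl

/-- The operator `u ↦ ⌊u⌋_D` on 𝔐(Z); `⌊1⌋_D = †_D`. -/
def opD {Z : Type u} : MWord Z → MWord Z
  | .one => .ofW (.single (.letter .dagD))
  | .ofW u => .ofW (.single (.brD u))

/-- The operator `u ↦ ⌊u⌋_P` on 𝔐(Z); `⌊1⌋_P = †_P`. -/
def opP {Z : Type u} : MWord Z → MWord Z
  | .one => .ofW (.single (.letter .dagP))
  | .ofW u => .ofW (.single (.brP u))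

/-- The letter `z` as an element of 𝔐(Z). -/
def ofL {Z : Type u} (z : Z) : MWord Z := .ofW (.single (.letter (.ofZ z)))

/-- The breadth, with `|1| = 0`. -/
def breadth {Z : Type u} : MWord Z → ℕ
  | .one => 0
  | .ofW u => OpWord.breadth u

end MWord

/-- plainness over the extended alphabet: atoms are genuine letters of `Z`. -/
def atomPlainM {Z : Type u} : OpAtom (UL Z) → Prop
  | .letter (.ofZ _) => True
  | _ => False

def wordPlainM {Z : Type u} : OpWord (UL Z) → Prop
  | .single a => atomPlainM a
  | .cons a w => atomPlainM a ∧ wordPlainM w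

/-- plain elements of 𝔐(Z): the image of the free monoid M(Z) ⊆ 𝔐(Z). -/
def MWord.isPlain {Z : Type u} : MWord Z → Prop
  | .one => True
  | .ofW u => wordPlainM u

/-! ## The order ≤_uPD -/

mutual
  /-- `deg_P` for the unital setting: `deg_P(†_P) = 1`. -/
  def atomUDegP {Z : Type u} : OpAtom (UL Z) → ℕ
    | .letter .dagP => 1
    | .letter _ => 0
    | .brD w => wordUDegP w
    | .brP w => wordUDegP w + 1
  def wordUDegP {Z : Type u} : OpWord (UL Z) → ℕ
    | .single a => atomUDegP a
    | .cons a w => atomUDegP a + wordUDegP w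
end

/-- The strict order `<_PD` on 𝔖(Z′), where `deg_P(†_P) = 1` and `deg_GP(†_P) = 0`. -/
def updLtW {Z : Type u} [LT Z] (u v : OpWord (UL Z)) : Prop :=
  wordDegD u < wordDegD v ∨ (wordDegD u = wordDegD v ∧
  (wordUDegP u < wordUDegP v ∨ (wordUDegP u = wordUDegP v ∧
  (wordDegZ u < wordDegZ v ∨ (wordDegZ u = wordDegZ v ∧
  (wordDegGD u < wordDegGD v ∨ (wordDegGD u = wordDegGD v ∧
  (wordDegGP u < wordDegGP v ∨ (wordDegGP u = wordDegGP v ∧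
  dlexLt u v)))))))))

/-- The order `≤_uPD` on 𝔐(Z) = 𝔖(Z′) ⊔ {1} : it restricts to `≤_PD` on 𝔖(Z′) and
`1` is the smallest element. -/
def updLe {Z : Type u} [LT Z] : MWord Z → MWord Z → Prop
  | .one, _ => True
  | .ofW _, .one => False
  | .ofW u, .ofW v => updLtW u v ∨ u = v

/-! ## Contexts in 𝔐⋆(Z), substitution and evaluation -/

mutual
  /-- number of occurrences of the star `⋆` (the letter `ofZ none`). -/
  def atomMSCount {Z : Type u} : OpAtom (UL (Option Z)) → ℕ
    | .letter (.ofZ none) => 1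
    | .letter _ => 0
    | .brD w => wordMSCount w
    | .brP w => wordMSCount w
  def wordMSCount {Z : Type u} : OpWord (UL (Option Z)) → ℕ
    | .single a => atomMSCount a
    | .cons a w => atomMSCount a + wordMSCount w
end

def MWord.mscount {Z : Type u} : MWord (Option Z) → ℕ
  | .one => 0
  | .ofW w => wordMSCount w

mutual
  /-- evaluation of a word over the alphabet `X` under `σ : X → 𝔐(Z)`. -/
  def atomMEval {X : Type v} {Z : Type u} (σ : X → MWord Z) : OpAtom (UL X) → MWord Z
    | .letter (.ofZ x) => σ x
    | .letter .dagP => MWord.opP 1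
    | .letter .dagD => MWord.opD 1
    | .brD w => MWord.opD (wordMEval σ w)
    | .brP w => MWord.opP (wordMEval σ w)
  def wordMEval {X : Type v} {Z : Type u} (σ : X → MWord Z) : OpWord (UL X) → MWord Z
    | .single a => atomMEval σ a
    | .cons a w => atomMEval σ a * wordMEval σ w
end

/-- evaluation on 𝔐(X). -/
def MWord.meval {X : Type v} {Z : Type u} (σ : X → MWord Z) : MWord X → MWord Z
  | .one => 1
  | .ofW w => wordMEval σ w

/-- `msubst q u` is `q|_u` : replace the star `⋆` in `q ∈ 𝔐(Z ∪ {⋆})` by `u ∈ 𝔐(Z)`. -/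
def MWord.msubst {Z : Type u} (q : MWord (Option Z)) (u : MWord Z) : MWord Z :=
  q.meval (fun oz => match oz with | some z => MWord.ofL z | none => u)

mutual
  /-- number of occurrences of the letter `x ∈ X` in a word over `X′`. -/
  def atomMLCount {X : Type v} [DecidableEq X] (x : X) : OpAtom (UL X) → ℕ
    | .letter (.ofZ y) => if y = x then 1 else 0
    | .letter _ => 0
    | .brD w => wordMLCount x w
    | .brP w => wordMLCount x w
  def wordMLCount {X : Type v} [DecidableEq X] (x : X) : OpWord (UL X) → ℕ
    | .single a => atomMLCount x a
    | .cons a w => atomMLCount x a + wordMLCount x w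
end

def MWord.mlcount {X : Type v} [DecidableEq X] (x : X) : MWord X → ℕ
  | .one => 0
  | .ofW w => wordMLCount x w
/-! ## Monomial orders -/

/-- A monomial order on 𝔖(Z): a well order such that `u < v` implies `q|_u < q|_v`
for every context `q ∈ 𝔖⋆(Z)`. -/
def IsMonomialOrderS {Z : Type u} (le : OpWord Z → OpWord Z → Prop) : Prop :=
  IsLinWellOrder le ∧
  ∀ q : OpWord (Option Z), wordSCount q = 1 →
    ∀ u v : OpWord Z, ltOf le u v → ltOf le (substS q u) (substS q v)

/-- A monomial order on 𝔐(Z). -/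
def IsMonomialOrderM {Z : Type u} (le : MWord Z → MWord Z → Prop) : Prop :=
  IsLinWellOrder le ∧
  ∀ q : MWord (Option Z), MWord.mscount q = 1 →
    ∀ u v : MWord Z, ltOf le u v → ltOf le (MWord.msubst q u) (MWord.msubst q v)

/-- bracket compatibility of a relation on 𝔖(Z). -/
def BracketCompat {Z : Type u} (le : OpWord Z → OpWord Z → Prop) : Prop :=
  ∀ u v, le u v → le (OpWord.opD u) (OpWord.opD v) ∧ le (OpWord.opP u) (OpWord.opP v)

/-- left compatibility of a relation on 𝔖(Z). -/
def LeftCompat {Z : Type u} (le : OpWord Z → OpWord Z → Prop) : Prop :=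
  ∀ u v, le u v → ∀ w, le (w * u) (w * v)

/-- right compatibility of a relation on 𝔖(Z). -/
def RightCompat {Z : Type u} (le : OpWord Z → OpWord Z → Prop) : Prop :=
  ∀ u v, le u v → ∀ w, le (u * w) (v * w)

/-! ## The free operated algebras k𝔖(Z) and k𝔐(Z) -/

/-- `k𝔖(Z)`: the free nonunital Ω-operated `k`-algebra on `Z`, with basis 𝔖(Z). -/
abbrev FreeOpAlgS (k : Type w) [Field k] (Z : Type u) := MonoidAlgebra k (OpWord Z)

/-- `k𝔐(Z)`: the free unital Ω-operated `k`-algebra on `Z`, with basis 𝔐(Z). -/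
abbrev FreeOpAlgM (k : Type w) [Field k] (Z : Type u) := MonoidAlgebra k (MWord Z)

variable {k : Type w} [Field k] {Z : Type u}

/-- the monomial `w` as an element of k𝔖(Z). -/
def monoS (w : OpWord Z) : FreeOpAlgS k Z := MonoidAlgebra.single w 1

/-- the monomial `w` as an element of k𝔐(Z). -/
def monoM (w : MWord Z) : FreeOpAlgM k Z := MonoidAlgebra.single w 1

/-- the linear extension of the operator `⌊·⌋_D` to k𝔖(Z). -/
def liftDS (f : FreeOpAlgS k Z) : FreeOpAlgS k Z := MonoidAlgebra.mapDomain OpWord.opD f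
def liftPS (f : FreeOpAlgS k Z) : FreeOpAlgS k Z := MonoidAlgebra.mapDomain OpWord.opP f
def liftDM (f : FreeOpAlgM k Z) : FreeOpAlgM k Z := MonoidAlgebra.mapDomain MWord.opD f
def liftPM (f : FreeOpAlgM k Z) : FreeOpAlgM k Z := MonoidAlgebra.mapDomain MWord.opP f

/-- `w` is the leading monomial of `f` with respect to `le`. -/
def IsLMS (le : OpWord Z → OpWord Z → Prop) (f : FreeOpAlgS k Z) (w : OpWord Z) : Prop :=
  w ∈ f.coeff.support ∧ ∀ u ∈ f.coeff.support, le u w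

def IsLMM (le : MWord Z → MWord Z → Prop) (f : FreeOpAlgM k Z) (w : MWord Z) : Prop :=
  w ∈ f.coeff.support ∧ ∀ u ∈ f.coeff.support, le u w

/-- `q|_f`: the linear extension of the context `q` applied to `f ∈ k𝔖(Z)`. -/
def ctxApplyS (q : OpWord (Option Z)) (f : FreeOpAlgS k Z) : FreeOpAlgS k Z :=
  MonoidAlgebra.mapDomain (fun w => substS q w) f

def ctxApplyM (q : MWord (Option Z)) (f : FreeOpAlgM k Z) : FreeOpAlgM k Z :=
  MonoidAlgebra.mapDomain (fun w => MWord.msubst q w) f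

/-! ## Ω-ideals -/

/-- the Ω-ideal of k𝔖(Z) generated by `S`: the smallest subspace containing `S`,
closed under left and right multiplication and under both operators. -/
def omegaIdealS (S : Set (FreeOpAlgS k Z)) : Submodule k (FreeOpAlgS k Z) :=
  sInf {N | S ⊆ ↑N ∧ (∀ a : FreeOpAlgS k Z, ∀ x ∈ N, a * x ∈ N) ∧
      (∀ a : FreeOpAlgS k Z, ∀ x ∈ N, x * a ∈ N) ∧
      (∀ x ∈ N, liftDS x ∈ N) ∧ (∀ x ∈ N, liftPS x ∈ N)}

def omegaIdealM (S : Set (FreeOpAlgM k Z)) : Submodule k (FreeOpAlgM k Z) :=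
  sInf {N | S ⊆ ↑N ∧ (∀ a : FreeOpAlgM k Z, ∀ x ∈ N, a * x ∈ N) ∧
      (∀ a : FreeOpAlgM k Z, ∀ x ∈ N, x * a ∈ N) ∧
      (∀ x ∈ N, liftDM x ∈ N) ∧ (∀ x ∈ N, liftPM x ∈ N)}

/-- the (operator-free, associative) ideal of the subalgebra kS(Z) ⊆ k𝔖(Z)
generated by `S`. -/
def plainIdealS (S : Set (FreeOpAlgS k Z)) : Submodule k (FreeOpAlgS k Z) :=
  sInf {N | S ⊆ ↑N ∧ (∀ w : OpWord Z, wordPlain w → ∀ x ∈ N,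
      (monoS (k := k) w) * x ∈ N ∧ x * (monoS (k := k) w) ∈ N)}

/-- the (operator-free, associative) ideal of the subalgebra kM(Z) ⊆ k𝔐(Z)
generated by `S`. -/
def plainIdealM (S : Set (FreeOpAlgM k Z)) : Submodule k (FreeOpAlgM k Z) :=
  sInf {N | S ⊆ ↑N ∧ (∀ w : MWord Z, MWord.isPlain w → ∀ x ∈ N,
      (monoM (k := k) w) * x ∈ N ∧ x * (monoM (k := k) w) ∈ N)}

/-! ## Compositions, triviality and Gröbner–Shirshov bases.

Both are parameterized by a predicate `C` on the allowed contexts (for the operated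
theory, `C q` says the star occurs exactly once; for the classical operator-free
theory on the free (semi)group one additionally requires contexts to be plain)
and a predicate `W` on the words `u, v` allowed in intersection compositions. -/

/-- `h` is trivial modulo `(G, p)`: it can be written as a linear combination
`Σ cᵢ qᵢ|_{sᵢ}` with `sᵢ ∈ G` and `qᵢ|_{lm(sᵢ)} < p`. -/
def TrivialModS (le : OpWord Z → OpWord Z → Prop) (G : Set (FreeOpAlgS k Z))
    (C : OpWord (Option Z) → Prop) (p : OpWord Z) (h : FreeOpAlgS k Z) : Prop :=
  ∃ (n : ℕ) (c : Fin n → k) (q : Fin n → OpWord (Option Z)) (s : Fin n → FreeOpAlgS k Z)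
    (m : Fin n → OpWord Z),
      (∀ i, C (q i)) ∧ (∀ i, s i ∈ G) ∧ (∀ i, IsLMS le (s i) (m i)) ∧
      (∀ i, ltOf le (substS (q i) (m i)) p) ∧
      h = ∑ i, c i • ctxApplyS (q i) (s i)

def TrivialModM (le : MWord Z → MWord Z → Prop) (G : Set (FreeOpAlgM k Z))
    (C : MWord (Option Z) → Prop) (p : MWord Z) (h : FreeOpAlgM k Z) : Prop :=
  ∃ (n : ℕ) (c : Fin n → k) (q : Fin n → MWord (Option Z)) (s : Fin n → FreeOpAlgM k Z)
    (m : Fin n → MWord Z),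
      (∀ i, C (q i)) ∧ (∀ i, s i ∈ G) ∧ (∀ i, IsLMM le (s i) (m i)) ∧
      (∀ i, ltOf le (MWord.msubst (q i) (m i)) p) ∧
      h = ∑ i, c i • ctxApplyM (q i) (s i)

/-- `G` is a Gröbner–Shirshov basis: all intersection compositions `fu - vg` and all
inclusion compositions `f - q|_g` of monicized pairs from `G` are trivial. -/
def IsGSBasisS (le : OpWord Z → OpWord Z → Prop) (G : Set (FreeOpAlgS k Z))
    (C : OpWord (Option Z) → Prop) (W : OpWord Z → Prop) : Prop :=
  ∀ f ∈ G, ∀ g ∈ G, ∀ wf wg, IsLMS le f wf → IsLMS le g wg →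
    (∀ u v p : OpWord Z, W u → W v → p = wf * u → p = v * wg →
      max (OpWord.breadth wf) (OpWord.breadth wg) < OpWord.breadth p →
      OpWord.breadth p < OpWord.breadth wf + OpWord.breadth wg →
      TrivialModS le G C p
        (((f.coeff wf)⁻¹ • f) * monoS u - monoS v * ((g.coeff wg)⁻¹ • g))) ∧
    (∀ (q : OpWord (Option Z)) (p : OpWord Z), C q → p = wf → p = substS q wg →
      TrivialModS le G C p ((f.coeff wf)⁻¹ • f - ctxApplyS q ((g.coeff wg)⁻¹ • g)))

def IsGSBasisM (le : MWord Z → MWord Z → Prop) (G : Set (FreeOpAlgM k Z))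
    (C : MWord (Option Z) → Prop) (W : MWord Z → Prop) : Prop :=
  ∀ f ∈ G, ∀ g ∈ G, ∀ wf wg, IsLMM le f wf → IsLMM le g wg →
    (∀ u v p : MWord Z, W u → W v → p = wf * u → p = v * wg →
      max (MWord.breadth wf) (MWord.breadth wg) < MWord.breadth p →
      MWord.breadth p < MWord.breadth wf + MWord.breadth wg →
      TrivialModM le G C p
        (((f.coeff wf)⁻¹ • f) * monoM u - monoM v * ((g.coeff wg)⁻¹ • g))) ∧
    (∀ (q : MWord (Option Z)) (p : MWord Z), C q → p = wf → p = MWord.msubst q wg →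
      TrivialModM le G C p ((f.coeff wf)⁻¹ • f - ctxApplyM q ((g.coeff wg)⁻¹ • g)))

/-- the context predicate of the operated theory: the star occurs exactly once. -/
def ctxAllS {Z : Type u} (q : OpWord (Option Z)) : Prop := wordSCount q = 1
def ctxAllM {Z : Type u} (q : MWord (Option Z)) : Prop := MWord.mscount q = 1

/-- the context predicate of the classical (operator-free) theory. -/
def ctxPlainS {Z : Type u} (q : OpWord (Option Z)) : Prop := wordSCount q = 1 ∧ wordPlain q
def ctxPlainM {Z : Type u} (q : MWord (Option Z)) : Prop := MWord.mscount q = 1 ∧ MWord.isPlain q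

/-! ## Irreducible monomials -/

/-- `Irr(G)`: monomials that are not of the form `q|_{lm(s)}` for `s ∈ G`. -/
def irrS (le : OpWord Z → OpWord Z → Prop) (G : Set (FreeOpAlgS k Z)) : Set (OpWord Z) :=
  {x | ¬ ∃ s ∈ G, ∃ q : OpWord (Option Z), wordSCount q = 1 ∧
        ∃ m, IsLMS le s m ∧ x = substS q m}

def irrM (le : MWord Z → MWord Z → Prop) (G : Set (FreeOpAlgM k Z)) : Set (MWord Z) :=
  {x | ¬ ∃ s ∈ G, ∃ q : MWord (Option Z), MWord.mscount q = 1 ∧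
        ∃ m, IsLMM le s m ∧ x = MWord.msubst q m}

/-! ## Operated polynomial identities -/

/-- substitution instance of an OPI `φ ∈ k𝔖(X)` under `σ : X → 𝔖(Z)`. -/
def opiSubstS {X : Type v} (σ : X → OpWord Z) (φ : FreeOpAlgS k X) : FreeOpAlgS k Z :=
  MonoidAlgebra.mapDomain (wordSEval σ) φ

/-- substitution instance of an OPI `φ ∈ k𝔐(X)` under `σ : X → 𝔐(Z)`. -/
def opiSubstM {X : Type v} (σ : X → MWord Z) (φ : FreeOpAlgM k X) : FreeOpAlgM k Z :=
  MonoidAlgebra.mapDomain (MWord.meval σ) φ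

/-- `S_Φ(𝔖(Z))`: all substitution instances of the OPIs of `Φ`. -/
def sPhiS {X : Type v} (Φ : Set (FreeOpAlgS k X)) (Z : Type u) : Set (FreeOpAlgS k Z) :=
  {f | ∃ φ ∈ Φ, ∃ σ : X → OpWord Z, f = opiSubstS σ φ}

def sPhiM {X : Type v} (Φ : Set (FreeOpAlgM k X)) (Z : Type u) : Set (FreeOpAlgM k Z) :=
  {f | ∃ φ ∈ Φ, ∃ σ : X → MWord Z, f = opiSubstM σ φ}

/-- an OPI is multilinear if each variable occurring in it occurs exactly once in
every monomial of it. -/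
def MultilinearS {X : Type v} [DecidableEq X] (φ : FreeOpAlgS k X) : Prop :=
  ∀ x : X, (∃ u ∈ φ.coeff.support, 1 ≤ wordLCount x u) →
    ∀ u ∈ φ.coeff.support, wordLCount x u = 1

def MultilinearM {X : Type v} [DecidableEq X] (φ : FreeOpAlgM k X) : Prop :=
  ∀ x : X, (∃ u ∈ φ.coeff.support, 1 ≤ MWord.mlcount x u) →
    ∀ u ∈ φ.coeff.support, MWord.mlcount x u = 1
/-! ## The OPIs for differential Rota–Baxter and integro-differential algebras.

We write them directly as families of elements of k𝔖(Z), parameterized by the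
words substituted for the variables. -/

open OpWord in
/-- `φ₁(u,v) = P(u)P(v) − P(uP(v)) − P(P(u)v) − λP(uv)`. -/
def phi1 (lam : k) (u v : OpWord Z) : FreeOpAlgS k Z :=
  monoS (opP u * opP v) - monoS (opP (u * opP v)) - monoS (opP (opP u * v))
    - lam • monoS (opP (u * v))

open OpWord in
/-- `φ₂(u,v) = D(u)D(v) + λ⁻¹D(u)v + λ⁻¹uD(v) − λ⁻¹D(uv)`. -/
def phi2 (lam : k) (u v : OpWord Z) : FreeOpAlgS k Z :=
  monoS (opD u * opD v) + lam⁻¹ • monoS (opD u * v) + lam⁻¹ • monoS (u * opD v)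
    - lam⁻¹ • monoS (opD (u * v))

open OpWord in
/-- `φ₃(u) = D(P(u)) − u`. -/
def phi3 (u : OpWord Z) : FreeOpAlgS k Z :=
  monoS (opD (opP u)) - monoS u

open OpWord in
/-- `φ₄(u,v) = P(u)D(v) − D(P(u)v) + uv + λuD(v)`. -/
def phi4 (lam : k) (u v : OpWord Z) : FreeOpAlgS k Z :=
  monoS (opP u * opD v) - monoS (opD (opP u * v)) + monoS (u * v)
    + lam • monoS (u * opD v)

open OpWord in
/-- `φ₅(u,v) = D(u)P(v) − D(uP(v)) + uv + λD(u)v`. -/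
def phi5 (lam : k) (u v : OpWord Z) : FreeOpAlgS k Z :=
  monoS (opD u * opP v) - monoS (opD (u * opP v)) + monoS (u * v)
    + lam • monoS (opD u * v)

open OpWord in
/-- `φ₆(u,v) = P(D(u)P(v)) − uP(v) + P(uv) + λP(D(u)v)`. -/
def phi6 (lam : k) (u v : OpWord Z) : FreeOpAlgS k Z :=
  monoS (opP (opD u * opP v)) - monoS (u * opP v) + monoS (opP (u * v))
    + lam • monoS (opP (opD u * v))

open OpWord in
/-- `φ₇(u,v) = P(P(u)D(v)) − P(u)v + P(uv) + λP(uD(v))`. -/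
def phi7 (lam : k) (u v : OpWord Z) : FreeOpAlgS k Z :=
  monoS (opP (opP u * opD v)) - monoS (opP u * v) + monoS (opP (u * v))
    + lam • monoS (opP (u * opD v))

open OpWord in
/-- `φ₈(u,v) = P(D(P(u)v)) − P(u)v`. -/
def phi8 (u v : OpWord Z) : FreeOpAlgS k Z :=
  monoS (opP (opD (opP u * v))) - monoS (opP u * v)

open OpWord in
/-- `φ₉(u,v) = P(D(uP(v))) − uP(v)`. -/
def phi9 (u v : OpWord Z) : FreeOpAlgS k Z :=
  monoS (opP (opD (u * opP v))) - monoS (u * opP v)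

open OpWord in
/-- `φ₁⁰(u,v) = P(u)P(v) − P(uP(v)) − P(P(u)v)` (weight 0). -/
def phi1z (u v : OpWord Z) : FreeOpAlgS k Z :=
  monoS (opP u * opP v) - monoS (opP (u * opP v)) - monoS (opP (opP u * v))

open OpWord in
/-- `φ₂⁰(u,v) = D(u)v + uD(v) − D(uv)` (weight 0). -/
def phi2z (u v : OpWord Z) : FreeOpAlgS k Z :=
  monoS (opD u * v) + monoS (u * opD v) - monoS (opD (u * v))

open OpWord in
/-- `φ₄⁰(u,v) = P(u)D(v) − D(P(u)v) + uv` (weight 0). -/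
def phi4z (u v : OpWord Z) : FreeOpAlgS k Z :=
  monoS (opP u * opD v) - monoS (opD (opP u * v)) + monoS (u * v)

/-- `S_{Φ_dRB}(𝔖(Z))` for `Φ_dRB = {φ₁,…,φ₅}` (λ ≠ 0). -/
def SdRB (lam : k) (Z : Type u) : Set (FreeOpAlgS k Z) :=
  {f | (∃ u v, f = phi1 lam u v) ∨ (∃ u v, f = phi2 lam u v) ∨ (∃ u, f = phi3 u) ∨
       (∃ u v, f = phi4 lam u v) ∨ (∃ u v, f = phi5 lam u v)}

/-- `S_{Φ_0dRB}(𝔖(Z))` for `Φ_0dRB = {φ₁⁰, φ₂⁰, φ₃⁰, φ₄⁰}` (λ = 0). -/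
def SdRBz (k : Type w) [Field k] (Z : Type u) : Set (FreeOpAlgS k Z) :=
  {f | (∃ u v, f = phi1z u v) ∨ (∃ u v, f = phi2z u v) ∨ (∃ u, f = phi3 (k := k) u) ∨
       (∃ u v, f = phi4z u v)}

/-- `S_{Φ'_ID}(𝔖(Z))` for `Φ'_ID = {φ₂, φ₃, φ₆, φ₇}` (λ ≠ 0). -/
def SIDp (lam : k) (Z : Type u) : Set (FreeOpAlgS k Z) :=
  {f | (∃ u v, f = phi2 lam u v) ∨ (∃ u, f = phi3 u) ∨
       (∃ u v, f = phi6 lam u v) ∨ (∃ u v, f = phi7 lam u v)}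

/-- `S_{Φ_ID}(𝔖(Z))` for `Φ_ID = {φ₁, φ₂, φ₃, φ₄, φ₅, φ₈, φ₉}` (λ ≠ 0). -/
def SID (lam : k) (Z : Type u) : Set (FreeOpAlgS k Z) :=
  {f | (∃ u v, f = phi1 lam u v) ∨ (∃ u v, f = phi2 lam u v) ∨ (∃ u, f = phi3 u) ∨
       (∃ u v, f = phi4 lam u v) ∨ (∃ u v, f = phi5 lam u v) ∨
       (∃ u v, f = phi8 u v) ∨ (∃ u v, f = phi9 u v)}

/-! ## Miscellaneous helpers -/

/-- the lexicographic combination `≤_{α₁,…,α_k}` of a list of preorders: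
`u ≤ v` iff `u <_{α₁} v`, or `u =_{α₁} v` and `u ≤_{α₂,…,α_k} v`. -/
def lexComb {X : Type u} : List (X → X → Prop) → X → X → Prop
  | [] => fun _ _ => True
  | [r] => r
  | r :: s :: rest => fun a b => (r a b ∧ ¬ r b a) ∨ (r a b ∧ r b a ∧ lexComb (s :: rest) a b)

/-- the subspace `kS(Z) ⊆ k𝔖(Z)` spanned by the plain monomials. -/
def plainSpanS (k : Type w) [Field k] (Z : Type u) : Submodule k (FreeOpAlgS k Z) :=
  Submodule.span k ((fun x : OpWord Z => monoS (k := k) x) '' {x | wordPlain x})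

end

/-! `≤_PD` compares the degree vector `(deg_D, deg_P, deg_Z, deg_GD, deg_GP)` lexicographically
and breaks ties by `≤_Dlex`.

Compatibility: the degrees of `w * u` are those of `w` plus those of `u` plus cross terms
(`deg_D w * deg_Z u`, …) involving only degrees that are compared earlier, and `⌊·⌋_D`, `⌊·⌋_P`
shift one degree by one; `≤_Dlex` is compatible as well. A relation compatible with products and
with both operators is compatible with every context `q|_⋆`, by induction on `q`.

Well order: a trichotomous well-founded relation is automatically transitive, so only trichotomy
and well-foundedness of `<_PD` need proofs. `≤_Dlex` itself is not well-founded, but words with a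
given degree vector have the fixed size `deg_D + deg_P + deg_Z`, and on words of size `≤ t` it is
well-founded by induction on `t`: atoms of size `≤ t + 1` map into `Z ⊕ 𝔖(Z) ⊕ 𝔖(Z)` ordered
lexicographically with `≤_Dlex` on words of size `≤ t`, and words of size `≤ t` map into the
shortlex order on lists of atoms of size `≤ t`. -/

theorem isLinWellOrder_of_isWellOrder {X : Type*} (r : X → X → Prop) [IsWellOrder X r] :
    IsLinWellOrder (fun a b => r a b ∨ a = b) := by
  refine ⟨⟨fun _ => Or.inr rfl, ?_, ?_, ?_⟩, ?_⟩
  · rintro a b c (hab | rfl) (hbc | rfl)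
    exacts [Or.inl (trans_of r hab hbc), Or.inl hab, Or.inl hbc, Or.inr rfl]
  · rintro a b (hab | rfl) (hba | hba)
    exacts [(asymm_of r hab hba).elim, hba.symm, rfl, rfl]
  · intro a b
    rcases trichotomous_of r a b with h | h | h
    exacts [Or.inl (Or.inl h), Or.inl (Or.inr h), Or.inr (Or.inl h)]
  · intro f hf
    have hwf : WellFounded r := IsWellFounded.wf
    obtain ⟨N, hN⟩ := hwf.min_mem (Set.range f) (Set.range_nonempty f)
    refine ⟨N, fun n hn => ?_⟩
    induction n, hn using Nat.le_induction with
    | base => rfl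
    | succ n _ ih =>
      rcases hf n with h | h
      · rw [ih, hN] at h
        exact (hwf.not_lt_min (Set.range f) (Set.mem_range_self (n + 1)) h).elim
      · exact h.trans ih

theorem ltOf_or_eq_iff {X : Type*} {r : X → X → Prop} [Std.Irrefl r] {a b : X} :
    ltOf (fun a b => r a b ∨ a = b) a b ↔ r a b := by
  refine ⟨fun ⟨h, hne⟩ => h.resolve_right hne, fun h => ⟨Or.inl h, ?_⟩⟩
  rintro rfl
  exact irrefl a h

namespace OpWord

variable {Z : Type u}

theorem cons_mul (a : OpAtom Z) (u v : OpWord Z) : cons a u * v = cons a (u * v) := rfl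

theorem breadth_mul : ∀ u v : OpWord Z, breadth (u * v) = breadth u + breadth v
  | single _, _ => rfl
  | cons _ u, v => by simp only [cons_mul, breadth, breadth_mul u v]; omega

theorem one_le_breadth (u : OpWord Z) : 1 ≤ breadth u := by
  cases u <;> simp [breadth]

def atoms : OpWord Z → List (OpAtom Z)
  | single a => [a]
  | cons a w => a :: atoms w

theorem length_atoms : ∀ u : OpWord Z, (atoms u).length = breadth u
  | single _ => rfl
  | cons _ w => by simp [atoms, breadth, length_atoms w, Nat.add_comm]

end OpWord

open OpWord

section Degrees

variable {Z : Type u}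

theorem wordDegD_mul : ∀ u v : OpWord Z, wordDegD (u * v) = wordDegD u + wordDegD v
  | .single _, _ => rfl
  | .cons _ u, v => by simp only [cons_mul, wordDegD, wordDegD_mul u v]; omega

theorem wordDegP_mul : ∀ u v : OpWord Z, wordDegP (u * v) = wordDegP u + wordDegP v
  | .single _, _ => rfl
  | .cons _ u, v => by simp only [cons_mul, wordDegP, wordDegP_mul u v]; omega

theorem wordDegZ_mul : ∀ u v : OpWord Z, wordDegZ (u * v) = wordDegZ u + wordDegZ v
  | .single _, _ => rfl
  | .cons _ u, v => by simp only [cons_mul, wordDegZ, wordDegZ_mul u v]; omega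

theorem wordDegGD_mul : ∀ u v : OpWord Z,
    wordDegGD (u * v) = wordDegGD u + wordDegGD v + wordDegD u * wordDegZ v
  | .single _, _ => rfl
  | .cons _ u, v => by
      simp only [cons_mul, wordDegGD, wordDegD, wordDegZ_mul, wordDegGD_mul u v]
      ring

theorem wordDegGP_mul : ∀ u v : OpWord Z,
    wordDegGP (u * v) = wordDegGP u + wordDegGP v
      + wordDegP u * wordDegZ v + wordDegP v * wordDegZ u
  | .single _, _ => rfl
  | .cons _ u, v => by
      simp only [cons_mul, wordDegGP, wordDegP, wordDegZ, wordDegP_mul, wordDegZ_mul,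
        wordDegGP_mul u v]
      ring

def atomSize (a : OpAtom Z) : ℕ := atomDegD a + atomDegP a + atomDegZ a

def wordSize (u : OpWord Z) : ℕ := wordDegD u + wordDegP u + wordDegZ u

theorem one_le_atomSize (a : OpAtom Z) : 1 ≤ atomSize a := by
  cases a <;> simp only [atomSize, atomDegD, atomDegP, atomDegZ] <;> omega

theorem atomSize_brD (w : OpWord Z) : atomSize (.brD w) = wordSize w + 1 := by
  simp only [atomSize, wordSize, atomDegD, atomDegP, atomDegZ]; omega

theorem atomSize_brP (w : OpWord Z) : atomSize (.brP w) = wordSize w + 1 := by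
  simp only [atomSize, wordSize, atomDegD, atomDegP, atomDegZ]; omega

theorem wordSize_cons (a : OpAtom Z) (w : OpWord Z) :
    wordSize (.cons a w) = atomSize a + wordSize w := by
  simp only [atomSize, wordSize, wordDegD, wordDegP, wordDegZ]; omega

theorem one_le_wordSize (u : OpWord Z) : 1 ≤ wordSize u := by
  cases u with
  | single a => exact one_le_atomSize a
  | cons a w => rw [wordSize_cons]; have := one_le_atomSize a; omega

theorem atomSize_le_wordSize_of_mem :
    ∀ {u : OpWord Z} {a : OpAtom Z}, a ∈ atoms u → atomSize a ≤ wordSize u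
  | .single _, _, h => by rw [List.mem_singleton.1 h]; rfl
  | .cons _ _, _, h => by
      rw [wordSize_cons]
      rcases List.mem_cons.1 h with rfl | h
      · omega
      · have := atomSize_le_wordSize_of_mem h; omega

end Degrees

section Dlex

variable {Z : Type u} [LinearOrder Z]

theorem dlexLt_trichotomous_of {u v : OpWord Z}
    (h : breadth u = breadth v → wordLexLt u v ∨ u = v ∨ wordLexLt v u) :
    dlexLt u v ∨ u = v ∨ dlexLt v u := by
  unfold dlexLt
  rcases lt_trichotomy (breadth u) (breadth v) with hb | hb | hb
  · exact Or.inl (Or.inl hb)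
  · rcases h hb with h | h | h
    exacts [Or.inl (Or.inr ⟨hb, h⟩), Or.inr (Or.inl h), Or.inr (Or.inr (Or.inr ⟨hb.symm, h⟩))]
  · exact Or.inr (Or.inr (Or.inl hb))

mutual
theorem atomDlexLt_trichotomous :
    ∀ a b : OpAtom Z, atomDlexLt a b ∨ a = b ∨ atomDlexLt b a
  | .letter x, .letter y => by
      rcases lt_trichotomy x y with h | rfl | h
      exacts [Or.inl h, Or.inr (Or.inl rfl), Or.inr (Or.inr h)]
  | .brD u, .brD v | .brP u, .brP v => by
      rcases dlexLt_trichotomous_of (wordLexLt_trichotomous u v) with h | rfl | h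
      exacts [Or.inl h, Or.inr (Or.inl rfl), Or.inr (Or.inr h)]
  | .letter _, .brD _ | .letter _, .brP _ | .brD _, .brP _ => Or.inl trivial
  | .brD _, .letter _ | .brP _, .letter _ | .brP _, .brD _ => Or.inr (Or.inr trivial)
termination_by a => sizeOf a

theorem wordLexLt_trichotomous : ∀ u v : OpWord Z, breadth u = breadth v →
    wordLexLt u v ∨ u = v ∨ wordLexLt v u
  | .single a, .single b, _ => by
      rcases atomDlexLt_trichotomous a b with h | rfl | h
      exacts [Or.inl h, Or.inr (Or.inl rfl), Or.inr (Or.inr h)]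
  | .cons a u, .cons b v, hb => by
      rcases atomDlexLt_trichotomous a b with h | rfl | h
      · exact Or.inl (Or.inl h)
      · rcases wordLexLt_trichotomous u v (by simpa [breadth] using hb) with h | rfl | h
        exacts [Or.inl (Or.inr ⟨rfl, h⟩), Or.inr (Or.inl rfl),
          Or.inr (Or.inr (Or.inr ⟨rfl, h⟩))]
      · exact Or.inr (Or.inr (Or.inl h))
  | .single _, .cons _ v, hb | .cons _ v, .single _, hb => by
      have := one_le_breadth v
      simp only [breadth] at hb
      omega
termination_by u => sizeOf u
end

instance : Std.Trichotomous (dlexLt (Z := Z)) :=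
  Std.trichotomous_of_rel_or_eq_or_rel_swap (dlexLt_trichotomous_of (wordLexLt_trichotomous _ _))

theorem wordLexLt_mul_left : ∀ (w : OpWord Z) {u v : OpWord Z}, wordLexLt u v →
    wordLexLt (w * u) (w * v)
  | .single _, _, _, h => Or.inr ⟨rfl, h⟩
  | .cons _ w, _, _, h => Or.inr ⟨rfl, wordLexLt_mul_left w h⟩

theorem wordLexLt_mul_right : ∀ {u v : OpWord Z}, breadth u = breadth v →
    wordLexLt u v → ∀ w, wordLexLt (u * w) (v * w)
  | .single _, .single _, _, h, _ => Or.inl h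
  | .cons _ _, .cons _ _, hb, h, w => by
      rcases h with h | ⟨rfl, h⟩
      · exact Or.inl h
      · exact Or.inr ⟨rfl, wordLexLt_mul_right (by simpa [breadth] using hb) h w⟩
  | .single _, .cons _ v, hb, _, _ | .cons _ v, .single _, hb, _, _ => by
      have := one_le_breadth v
      simp only [breadth] at hb
      omega

theorem dlexLt_mul_left (w : OpWord Z) {u v : OpWord Z} (h : dlexLt u v) :
    dlexLt (w * u) (w * v) := by
  rcases h with h | ⟨hb, h⟩
  · exact Or.inl (by rw [breadth_mul, breadth_mul]; omega)
  · exact Or.inr ⟨by rw [breadth_mul, breadth_mul, hb], wordLexLt_mul_left w h⟩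

theorem dlexLt_mul_right (w : OpWord Z) {u v : OpWord Z} (h : dlexLt u v) :
    dlexLt (u * w) (v * w) := by
  rcases h with h | ⟨hb, h⟩
  · exact Or.inl (by rw [breadth_mul, breadth_mul]; omega)
  · exact Or.inr ⟨by rw [breadth_mul, breadth_mul, hb], wordLexLt_mul_right hb h w⟩

/-- `dlexLt` has the infinite descending chain `⋯ < ⌊⌊⌊z⌋_P⌋_D⌋_D < ⌊⌊z⌋_P⌋_D`; bounding the size
of the smaller word makes it well-founded. -/
def dlexLtBelow (t : ℕ) (u v : OpWord Z) : Prop := dlexLt u v ∧ wordSize u ≤ t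

def atomDlexLtBelow (t : ℕ) (a b : OpAtom Z) : Prop := atomDlexLt a b ∧ atomSize a ≤ t

theorem lex_atoms_of_wordLexLt {t : ℕ} : ∀ {u v : OpWord Z}, breadth u = breadth v →
    wordLexLt u v → (∀ a ∈ atoms u, atomSize a ≤ t) →
    List.Lex (atomDlexLtBelow t) (atoms u) (atoms v)
  | .single a, .single b, _, h, hs => .rel ⟨h, hs a (by simp [atoms])⟩
  | .cons a u, .cons b v, hb, h, hs => by
      rcases h with h | ⟨rfl, h⟩
      · exact .rel ⟨h, hs a (by simp [atoms])⟩
      · exact .cons (lex_atoms_of_wordLexLt (by simpa [breadth] using hb) h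
          fun c hc => hs c (by simp [atoms, hc]))
  | .single _, .cons _ v, hb, _, _ | .cons _ v, .single _, hb, _, _ => by
      have := one_le_breadth v
      simp only [breadth] at hb
      omega

def OpAtom.toSum : OpAtom Z → Z ⊕ OpWord Z ⊕ OpWord Z
  | .letter z => .inl z
  | .brD w => .inr (.inl w)
  | .brP w => .inr (.inr w)

theorem wellFounded_dlexLtBelow_of_atom {t : ℕ}
    (h : WellFounded (atomDlexLtBelow (Z := Z) t)) :
    WellFounded (dlexLtBelow (Z := Z) t) := by
  refine (InvImage.wf atoms (List.Shortlex.wf h)).mono ?_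
  rintro u v ⟨huv | ⟨hb, huv⟩, hs⟩
  · exact .of_length_lt (by simpa [length_atoms] using huv)
  · exact .of_lex (by simpa [length_atoms] using hb)
      (lex_atoms_of_wordLexLt hb huv fun a ha => (atomSize_le_wordSize_of_mem ha).trans hs)

variable [WellFoundedLT Z]

theorem wellFounded_atomDlexLtBelow_succ {t : ℕ} (h : WellFounded (dlexLtBelow (Z := Z) t)) :
    WellFounded (atomDlexLtBelow (Z := Z) (t + 1)) := by
  refine (InvImage.wf OpAtom.toSum (Sum.lex_wf wellFounded_lt (Sum.lex_wf h h))).mono ?_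
  rintro (a | a | a) (b | b | b) ⟨hab, hs⟩ <;>
    simp_all [InvImage, OpAtom.toSum, atomDlexLt, dlexLtBelow, dlexLt, atomSize_brD,
      atomSize_brP]

theorem wellFounded_dlexLtBelow : ∀ t, WellFounded (dlexLtBelow (Z := Z) t)
  | 0 => ⟨fun u => ⟨u, fun v h => absurd h.2 (by have := one_le_wordSize v; omega)⟩⟩
  | t + 1 => wellFounded_dlexLtBelow_of_atom
      (wellFounded_atomDlexLtBelow_succ (wellFounded_dlexLtBelow t))

theorem wellFoundedOn_dlexLt_setOf_wordSize_le (t : ℕ) :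
    {u : OpWord Z | wordSize u ≤ t}.WellFoundedOn dlexLt :=
  (InvImage.wf Subtype.val (wellFounded_dlexLtBelow t)).mono fun a _ h => ⟨h, a.2⟩

end Dlex

section PD

variable {Z : Type u}

def degKey (u : OpWord Z) : ℕ ×ₗ ℕ ×ₗ ℕ ×ₗ ℕ ×ₗ ℕ :=
  toLex (wordDegD u, toLex (wordDegP u, toLex (wordDegZ u, toLex (wordDegGD u, wordDegGP u))))

theorem wordSize_eq_of_degKey_eq {u v : OpWord Z} (h : degKey u = degKey v) :
    wordSize u = wordSize v := by
  simp only [degKey, toLex_inj, Prod.mk.injEq] at h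
  simp only [wordSize, h]

theorem pdLt_eq_invImage [LT Z] :
    pdLt = InvImage (Prod.Lex (· < ·) dlexLt) fun u : OpWord Z => (degKey u, u) := by
  ext u v
  simp only [InvImage, pdLt, Prod.lex_def, degKey, Prod.Lex.toLex_lt_toLex, toLex_inj,
    Prod.mk.injEq]
  tauto

variable [LinearOrder Z]

theorem pdLt_leftCompat : LeftCompat (pdLt (Z := Z)) := by
  intro u v h w
  have hlex : dlexLt u v → dlexLt (w * u) (w * v) := dlexLt_mul_left w
  simp only [pdLt, wordDegD_mul, wordDegP_mul, wordDegZ_mul, wordDegGD_mul, wordDegGP_mul] at h ⊢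
  grind

theorem pdLt_rightCompat : RightCompat (pdLt (Z := Z)) := by
  intro u v h w
  have hlex : dlexLt u v → dlexLt (u * w) (v * w) := dlexLt_mul_right w
  simp only [pdLt, wordDegD_mul, wordDegP_mul, wordDegZ_mul, wordDegGD_mul, wordDegGP_mul] at h ⊢
  grind

theorem pdLt_bracketCompat : BracketCompat (pdLt (Z := Z)) := by
  intro u v h
  have hD : dlexLt u v → dlexLt (opD u) (opD v) := fun h => Or.inr ⟨rfl, h⟩
  have hP : dlexLt u v → dlexLt (opP u) (opP v) := fun h => Or.inr ⟨rfl, h⟩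
  simp only [pdLt, opD, opP, wordDegD, wordDegP, wordDegZ, wordDegGD, wordDegGP, atomDegD,
    atomDegP, atomDegZ, atomDegGD, atomDegGP] at h hD hP ⊢
  grind

variable [WellFoundedLT Z]

instance : IsWellOrder (OpWord Z) pdLt := by
  rw [pdLt_eq_invImage]
  refine { wf := ?_, trichotomous := (InvImage.trichotomous ?_).trichotomous }
  · refine WellFounded.prod_lex_of_wellFoundedOn_fiber (g := id) wellFounded_lt.onFun fun k => ?_
    rcases (degKey ⁻¹' {k}).eq_empty_or_nonempty with hk | ⟨u, hu⟩
    · rw [hk]; exact Set.wellFoundedOn_empty _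
    · exact (wellFoundedOn_dlexLt_setOf_wordSize_le (wordSize u)).subset
        fun v hv => (wordSize_eq_of_degKey_eq (hv.trans hu.symm)).le
  · exact fun _ _ h => congrArg Prod.snd h

end PD

section Substitution

variable {Z : Type u}

mutual
theorem atomSEval_eq_of_atomSCount_eq_zero {σ τ : Option Z → OpWord Z}
    (h : ∀ z, σ (some z) = τ (some z)) :
    ∀ a : OpAtom (Option Z), atomSCount a = 0 → atomSEval σ a = atomSEval τ a
  | .letter (some z), _ => h z
  | .brD w, hw => congrArg OpWord.opD (wordSEval_eq_of_wordSCount_eq_zero h w hw)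
  | .brP w, hw => congrArg OpWord.opP (wordSEval_eq_of_wordSCount_eq_zero h w hw)
termination_by a => sizeOf a

theorem wordSEval_eq_of_wordSCount_eq_zero {σ τ : Option Z → OpWord Z}
    (h : ∀ z, σ (some z) = τ (some z)) :
    ∀ q : OpWord (Option Z), wordSCount q = 0 → wordSEval σ q = wordSEval τ q
  | .single a, ha => atomSEval_eq_of_atomSCount_eq_zero h a ha
  | .cons a w, hq => by
      obtain ⟨ha, hw⟩ : atomSCount a = 0 ∧ wordSCount w = 0 := by
        simpa [wordSCount] using hq
      simp only [wordSEval, atomSEval_eq_of_atomSCount_eq_zero h a ha,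
        wordSEval_eq_of_wordSCount_eq_zero h w hw]
termination_by q => sizeOf q
end

variable {r : OpWord Z → OpWord Z → Prop}

mutual
theorem atomSEval_rel (hB : BracketCompat r) (hL : LeftCompat r) (hR : RightCompat r)
    {σ τ : Option Z → OpWord Z} (hsome : ∀ z, σ (some z) = τ (some z))
    (hnone : r (σ none) (τ none)) :
    ∀ a : OpAtom (Option Z), atomSCount a = 1 → r (atomSEval σ a) (atomSEval τ a)
  | .letter none, _ => hnone
  | .brD w, hw => (hB _ _ (wordSEval_rel hB hL hR hsome hnone w hw)).1
  | .brP w, hw => (hB _ _ (wordSEval_rel hB hL hR hsome hnone w hw)).2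
termination_by a => sizeOf a

theorem wordSEval_rel (hB : BracketCompat r) (hL : LeftCompat r) (hR : RightCompat r)
    {σ τ : Option Z → OpWord Z} (hsome : ∀ z, σ (some z) = τ (some z))
    (hnone : r (σ none) (τ none)) :
    ∀ q : OpWord (Option Z), wordSCount q = 1 → r (wordSEval σ q) (wordSEval τ q)
  | .single a, ha => atomSEval_rel hB hL hR hsome hnone a ha
  | .cons a w, hq => by
      change r (atomSEval σ a * wordSEval σ w) (atomSEval τ a * wordSEval τ w)
      have : atomSCount a + wordSCount w = 1 := hq
      rcases Nat.eq_zero_or_pos (atomSCount a) with ha | ha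
      · rw [atomSEval_eq_of_atomSCount_eq_zero hsome a ha]
        exact hL _ _ (wordSEval_rel hB hL hR hsome hnone w (by omega)) _
      · rw [wordSEval_eq_of_wordSCount_eq_zero hsome w (by omega)]
        exact hR _ _ (atomSEval_rel hB hL hR hsome hnone a (by omega)) _
termination_by q => sizeOf q
end

theorem substS_rel (hB : BracketCompat r) (hL : LeftCompat r) (hR : RightCompat r)
    {q : OpWord (Option Z)} (hq : wordSCount q = 1) {u v : OpWord Z} (h : r u v) :
    r (substS q u) (substS q v) := by
  refine wordSEval_rel hB hL hR ?_ h q hq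
  exact fun _ => rfl

end Substitution

/-- For any set `Z` equipped with a well order, the well order `≤_PD`
is a monomial order on the free Ω-operated semigroup 𝔖(Z). -/
theorem pdLe_isMonomialOrder (Z : Type u) [LinearOrder Z] [WellFoundedLT Z] :
    IsMonomialOrderS (pdLe (Z := Z)) :=
  ⟨isLinWellOrder_of_isWellOrder pdLt, fun _ hq _ _ h => ltOf_or_eq_iff.2
    (substS_rel pdLt_bracketCompat pdLt_leftCompat pdLt_rightCompat hq (ltOf_or_eq_iff.1 h))⟩
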